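/- arXiv:1412.3523 — 2 statements merged into one kernel-verified Lean document; each statement's English description precedes it below -/
import Mathlib

section
/- Let k be a finite field, ψ a nontrivial additive character of k, and n ≥ 1. Define K_{n,a}(ψ) = Σ_{ζ_1⋯ζ_n = a, ζ_i ∈ k^×} ψ(Σ ζ_i). Then for any a' ∈ k^× with a' ≠ 1, there exists a ∈ k^× such that K_{n,a}(ψ) ≠ K_{n, a·a'}(ψ). -/
/-!
Twisting by a multiplicative character `χ` and summing over `a` turns the Kloosterman sums into
the `n`-th power of the Gauss sum: `∑ₐ χ(a) K_{n,a}(ψ) = G(χ, ψ)ⁿ`. Choose `χ` with `χ(a') ≠ 1`.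
If `a ↦ K_{n,a}(ψ)` were invariant under `a ↦ a a'`, reindexing would multiply the twisted sum by
`χ(a')`, forcing it to vanish; but `G(χ, ψ) ≠ 0` since `χ` is nontrivial and `ψ` is primitive.
-/

open Finset

/-- The generalized Kloosterman sum `K_{n,a}(ψ)`, the sum of `ψ(ζ₁ + ⋯ + ζₙ)`
over `n`-tuples `(ζ₁, …, ζₙ)` of elements of `kˣ` with product `a`. -/
noncomputable def kloosterman {k : Type*} [Field k] [Fintype k] [DecidableEq k]
    (ψ : k → ℂ) (n : ℕ) (a : kˣ) : ℂ :=
  ∑ ζ ∈ Finset.univ.filter (fun ζ : Fin n → kˣ => (∏ i, ((ζ i : k))) = (a : k)),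
    ψ (∑ i, ((ζ i : k)))

lemma AddChar.map_sum_eq_prod {A M : Type*} [AddCommMonoid A] [CommMonoid M] (ψ : AddChar A M)
    {ι : Type*} (s : Finset ι) (f : ι → A) :
    ψ (∑ i ∈ s, f i) = ∏ i ∈ s, ψ (f i) := by
  induction s using Finset.cons_induction with
  | empty => simp
  | cons a s _ ih => rw [sum_cons, prod_cons, ψ.map_add_eq_mul, ih]

lemma gaussSum_eq_sum_units {R R' : Type*} [CommRing R] [Fintype R] [DecidableEq R] [CommRing R']
    (χ : MulChar R R') (ψ : AddChar R R') :
    gaussSum χ ψ = ∑ u : Rˣ, χ u * ψ u := by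
  rw [gaussSum, ← sum_subset (subset_univ (univ.map ⟨((↑) : Rˣ → R), Units.val_injective⟩)),
    sum_map]
  · rfl
  intro x _ hx
  have hx : ¬IsUnit x := by simpa [IsUnit, eq_comm] using hx
  rw [χ.map_nonunit hx, zero_mul]

lemma MulChar.sum_units_mul_eq_zero {R R' : Type*} [CommMonoid R] [Fintype Rˣ] [CommRing R']
    [IsDomain R'] (χ : MulChar R R') {f : Rˣ → R'} {b : Rˣ} (hb : χ b ≠ 1)
    (hf : ∀ a, f (a * b) = f a) :
    ∑ a : Rˣ, χ a * f a = 0 := by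
  refine eq_zero_of_mul_eq_self_left hb ?_
  rw [mul_sum]
  refine Fintype.sum_equiv (Equiv.mulRight b) _ _ fun a => ?_
  rw [Equiv.coe_mulRight, hf, Units.val_mul, map_mul, mul_right_comm, mul_comm (χ b)]

section Kloosterman

variable {k : Type*} [Field k] [Fintype k] [DecidableEq k] (ψ : AddChar k ℂ) (χ : MulChar k ℂ)
  (n : ℕ)

lemma mulChar_mul_kloosterman (a : kˣ) :
    χ a * kloosterman ψ n a =
      ∑ ζ ∈ univ.filter (fun ζ : Fin n → kˣ => ∏ i, ζ i = a), ∏ i, χ (ζ i) * ψ (ζ i) := by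
  have hfilter : univ.filter (fun ζ : Fin n → kˣ => ∏ i, (ζ i : k) = a) =
      univ.filter (fun ζ => ∏ i, ζ i = a) := by
    refine filter_congr fun ζ _ => ?_
    rw [← Units.coe_prod, Units.val_inj]
  rw [kloosterman, mul_sum, hfilter]
  refine sum_congr rfl fun ζ hζ => ?_
  rw [prod_mul_distrib, ← map_prod χ, ← ψ.map_sum_eq_prod, ← Units.coe_prod, (mem_filter.mp hζ).2]

theorem sum_mulChar_mul_kloosterman :
    ∑ a : kˣ, χ a * kloosterman ψ n a = gaussSum χ ψ ^ n := by
  simp_rw [mulChar_mul_kloosterman, gaussSum_eq_sum_units, Fintype.sum_pow]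
  exact sum_fiberwise univ (fun ζ : Fin n → kˣ => ∏ i, ζ i) _

end Kloosterman

theorem exists_kloosterman_ne_general
    {k : Type*} [Field k] [Fintype k] [DecidableEq k]
    (ψ : AddChar k ℂ) (hψ : ψ ≠ 1) (n : ℕ)
    (a' : kˣ) (ha' : a' ≠ 1) :
    ∃ a : kˣ, kloosterman (⇑ψ) n a ≠ kloosterman (⇑ψ) n (a * a') := by
  by_contra! hinvariant
  obtain ⟨χ, hχ⟩ :=
    MulChar.exists_apply_ne_one_of_hasEnoughRootsOfUnity k ℂ (Units.val_eq_one.not.mpr ha')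
  have hχ_ne_one : χ ≠ 1 := by
    rintro rfl
    exact hχ (MulChar.one_apply_coe a')
  have hgauss : gaussSum χ ψ ≠ 0 :=
    gaussSum_ne_zero_of_nontrivial (by exact_mod_cast Fintype.card_ne_zero) hχ_ne_one
      (AddChar.IsPrimitive.of_ne_one hψ)
  refine pow_ne_zero n hgauss ?_
  rw [← sum_mulChar_mul_kloosterman]
  exact χ.sum_units_mul_eq_zero hχ fun a => (hinvariant a).symm

/-- for any `a' ≠ 1` in `k^×` there is `a` with
`K_{n,a}(ψ) ≠ K_{n,a·a'}(ψ)`. -/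
theorem exists_kloosterman_ne
    {k : Type*} [Field k] [Fintype k] [DecidableEq k]
    (ψ : AddChar k ℂ) (hψ : ψ ≠ 1) (n : ℕ) (hn : 1 ≤ n)
    (a' : kˣ) (ha' : a' ≠ 1) :
    ∃ a : kˣ, kloosterman (⇑ψ) n a ≠ kloosterman (⇑ψ) n (a * a') :=
  exists_kloosterman_ne_general ψ hψ n a' ha'
end

section
/- Let k ⊂ k_r be a degree-r extension of finite fields with |k| = q, let s be an integer with 1 ≤ s ≤ r-1 and gcd(s, r) = 1, and let m ≥ 1 with n = mr. If d ∈ k_r^× and λ ∈ k^× satisfy d^{q^s - 1} = λ^m, then λ^{n_q} = 1 where n_q = gcd(n, q-1). -/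
/-!
Apply the norm `N : k_r^× → k^×` to `d ^ (q ^ s - 1) = λ ^ m`. Since `N d` lies in `k^×`, whose
order `q - 1` divides `q ^ s - 1`, the left side becomes `1`, while the right side becomes
`λ ^ (m r)` because `N` raises elements of `k` to the `r`-th power. Together with `λ ^ (q - 1) = 1`
this gives `λ ^ gcd(m r, q - 1) = 1`.
-/

theorem FiniteField.units_pow_card_pow_sub_one_eq_one {K : Type*} [GroupWithZero K] [Fintype K]
    (u : Kˣ) (s : ℕ) : u ^ (Fintype.card K ^ s - 1) = 1 := by
  classical
  apply orderOf_dvd_iff_pow_eq_one.mp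
  calc orderOf u ∣ Fintype.card Kˣ := orderOf_dvd_card
    _ = Fintype.card K - 1 := Fintype.card_units K
    _ ∣ Fintype.card K ^ s - 1 := by simpa using Nat.sub_dvd_pow_sub_pow (Fintype.card K) 1 s

theorem Algebra.units_map_norm_units_map_algebraMap {K L : Type*} [Field K] [Field L]
    [Algebra K L] [FiniteDimensional K L] (u : Kˣ) :
    Units.map (Algebra.norm K : L →* K) (Units.map (algebraMap K L).toMonoidHom u) =
      u ^ Module.finrank K L := by
  ext
  simp [Algebra.norm_algebraMap]

theorem FiniteField.pow_mul_finrank_eq_one_of_pow_eq {K L : Type*} [Field K] [Fintype K]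
    [Field L] [Algebra K L] [FiniteDimensional K L] {s m : ℕ} {d : Lˣ} {u : Kˣ}
    (h : d ^ (Fintype.card K ^ s - 1) = Units.map (algebraMap K L).toMonoidHom u ^ m) :
    u ^ (m * Module.finrank K L) = 1 := by
  have hnorm := congrArg (Units.map (Algebra.norm K : L →* K)) h
  rwa [map_pow, map_pow, units_pow_card_pow_sub_one_eq_one,
    Algebra.units_map_norm_units_map_algebraMap, ← pow_mul, mul_comm, eq_comm] at hnorm

theorem pow_gcd_eq_one_of_pow_eq_general
    {k kr : Type*} [Field k] [Fintype k] [Field kr] [Fintype kr] [Algebra k kr]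
    (q r : ℕ) (hq : Fintype.card k = q) (hr : Module.finrank k kr = r)
    (s : ℕ)
    (m n : ℕ) (hn : n = m * r)
    (d : krˣ) (l : kˣ)
    (h : d ^ (q ^ s - 1) = (Units.map (algebraMap k kr).toMonoidHom l) ^ m) :
    l ^ Nat.gcd n (q - 1) = 1 := by
  classical
  subst hq hr hn
  refine pow_gcd_eq_one.mpr ⟨FiniteField.pow_mul_finrank_eq_one_of_pow_eq h, ?_⟩
  rw [← Fintype.card_units k]
  exact pow_card_eq_one

/-- for a degree-`r` extension `kᵣ/k` of finite fields with
`|k| = q`, `1 ≤ s ≤ r-1`, `gcd(s,r) = 1`, `n = m r`: if `d ∈ kᵣ^×` and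
`l ∈ k^×` satisfy `d^(q^s - 1) = l^m`, then `l^(gcd(n, q-1)) = 1`. -/
theorem pow_gcd_eq_one_of_pow_eq
    {k kr : Type*} [Field k] [Fintype k] [Field kr] [Fintype kr] [Algebra k kr]
    (q r : ℕ) (hq : Fintype.card k = q) (hr : Module.finrank k kr = r)
    (s : ℕ) (hs1 : 1 ≤ s) (hs2 : s ≤ r - 1) (hsr : Nat.gcd s r = 1)
    (m n : ℕ) (hm : 1 ≤ m) (hn : n = m * r)
    (d : krˣ) (l : kˣ)
    (h : d ^ (q ^ s - 1) = (Units.map (algebraMap k kr).toMonoidHom l) ^ m) :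
    l ^ Nat.gcd n (q - 1) = 1 :=
  pow_gcd_eq_one_of_pow_eq_general q r hq hr s m n hn d l h
end
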